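/- arXiv:hep-th/0502184 — 3 statements merged into one kernel-verified Lean document; each statement's English description precedes it below -/
import Mathlib

section
/- For g > 0, the function S_2(ζ) = (1 + i g sinh ζ)/(1 - i g sinh ζ) is analytic on the strip {ζ ∈ ℂ : -κ_g < Im ζ < π + κ_g}, where κ_g = arcsin(1/g) if g > 1 and κ_g = π/2 if 0 < g ≤ 1; i.e., the denominator 1 - i g sinh ζ has no zeros in this strip. -/
open Complex

lemma sin_strip_lb (κ y : ℝ) (hκ0 : 0 < κ) (hκ : κ ≤ Real.pi / 2)
    (h1 : -κ < y) (h2 : y < Real.pi + κ) : -Real.sin κ < Real.sin y := by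
  have hπ := Real.pi_pos
  rcases le_or_gt y 0 with hy | hy
  · have := Real.strictMonoOn_sin (Set.mem_Icc.2 ⟨by linarith, by linarith⟩)
      (Set.mem_Icc.2 ⟨by linarith, by linarith⟩) h1
    rwa [Real.sin_neg] at this
  rcases lt_or_ge y Real.pi with hy2 | hy2
  · have h3 : 0 < Real.sin y := Real.sin_pos_of_pos_of_lt_pi hy hy2
    have h4 : 0 < Real.sin κ := Real.sin_pos_of_pos_of_lt_pi hκ0 (by linarith)
    linarith
  · have h5 : Real.sin (y - Real.pi) < Real.sin κ :=
      Real.strictMonoOn_sin (Set.mem_Icc.2 ⟨by linarith, by linarith⟩)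
        (Set.mem_Icc.2 ⟨by linarith, by linarith⟩) (by linarith)
    rw [Real.sin_sub_pi] at h5
    linarith

theorem stmt2 (g κg : ℝ) (hg : 0 < g)
    (hκg : κg = if 1 < g then Real.arcsin (1 / g) else Real.pi / 2) :
    (∀ ζ : ℂ, -κg < ζ.im → ζ.im < Real.pi + κg → 1 - I * g * Complex.sinh ζ ≠ 0) ∧
    DifferentiableOn ℂ
      (fun ζ : ℂ => (1 + I * g * Complex.sinh ζ) / (1 - I * g * Complex.sinh ζ))
      {ζ : ℂ | -κg < ζ.im ∧ ζ.im < Real.pi + κg} := by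
  have hπ := Real.pi_pos
  have hκ0 : 0 < κg := by
    rw [hκg]; split_ifs with h
    · exact Real.arcsin_pos.2 (by positivity)
    · linarith
  have hκle : κg ≤ Real.pi / 2 := by
    rw [hκg]; split_ifs with h
    · exact Real.arcsin_le_pi_div_two _
    · exact le_refl _
  have hg1 : (0:ℝ) < 1 / g := by positivity
  have hsinκ : g * Real.sin κg ≤ 1 := by
    rw [hκg]; split_ifs with h
    · rw [Real.sin_arcsin (by linarith) (by rw [div_le_one (by linarith)]; linarith)]
      rw [mul_one_div, div_le_one (by linarith)]
    · rw [Real.sin_pi_div_two, mul_one]; linarith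
  have key : ∀ ζ : ℂ, -κg < ζ.im → ζ.im < Real.pi + κg →
      1 - I * g * Complex.sinh ζ ≠ 0 := by
    intro ζ h1 h2 hzero
    have hs : Complex.sinh ζ =
        ((Real.sinh ζ.re * Real.cos ζ.im : ℝ) : ℂ)
          + ((Real.cosh ζ.re * Real.sin ζ.im : ℝ) : ℂ) * I := by
      conv_lhs => rw [← Complex.re_add_im ζ]
      rw [Complex.sinh_add, Complex.sinh_mul_I, Complex.cosh_mul_I,
        ← Complex.ofReal_sinh, ← Complex.ofReal_cosh, ← Complex.ofReal_sin,
        ← Complex.ofReal_cos]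
      push_cast
      ring
    rw [hs] at hzero
    have hre := congrArg Complex.re hzero
    have him := congrArg Complex.im hzero
    simp [Complex.ext_iff, Complex.sin_ofReal_re, Complex.cos_ofReal_re,
      Complex.sinh_ofReal_re, Complex.cosh_ofReal_re] at hre him
    have hcosh : 1 ≤ Real.cosh ζ.re := Real.one_le_cosh ζ.re
    have hsiny : -Real.sin κg < Real.sin ζ.im := sin_strip_lb κg ζ.im hκ0 hκle h1 h2
    have hsiny1 : -1 < Real.sin ζ.im := by nlinarith [Real.sin_le_one κg]
    rcases him with h0 | him
    · linarith
    rcases him with hx | hy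
    · have hc : Real.cosh ζ.re = 1 := by rw [hx, Real.cosh_zero]
      rw [hc, one_mul] at hre
      nlinarith [mul_lt_mul_of_pos_left hsiny hg]
    · have hsq := Real.sin_sq_add_cos_sq ζ.im
      have hsone : Real.sin ζ.im = 1 := by nlinarith
      rw [hsone, mul_one] at hre
      nlinarith
  refine ⟨key, ?_⟩
  apply DifferentiableOn.div
  · exact Differentiable.differentiableOn
      ((differentiable_const _).add (Complex.differentiable_sinh.const_mul _))
  · exact Differentiable.differentiableOn
      ((differentiable_const _).sub (Complex.differentiable_sinh.const_mul _))
  · intro ζ hζ; exact key ζ hζ.1 hζ.2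
end

section
/- Let ℬ_n = {y ∈ (0,1)^n : 0 < Σ y_j < 1} and 𝒯_n = ℝ^n + iℬ_n, and let f : 𝒯_n → ℂ be analytic in n complex variables with slices f_y(x) = f(x+iy) in L²(ℝⁿ), the map y ↦ f_y extending norm continuously to the closure, and ‖f_{(0,…,y_k,…,0)}‖₂ ≤ 1 for 0 < y_k < 1 and each k. Then ‖f_y‖₂ ≤ 1 for every y in the closure of ℬ_n. -/
open Complex MeasureTheory Filter Topology Metric

set_option maxHeartbeats 1600000

section Stmt7Aux

variable {n : ℕ}

private lemma memLp_conj {v : (Fin n → ℝ) → ℂ} (hv : MemLp v 2 (volume : Measure (Fin n → ℝ))) :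
    MemLp (fun x => (starRingEnd ℂ) (v x)) 2 (volume : Measure (Fin n → ℝ)) := by
  refine ⟨RCLike.continuous_conj.comp_aestronglyMeasurable hv.1, ?_⟩
  have : eLpNorm (fun x => (starRingEnd ℂ) (v x)) 2 (volume : Measure (Fin n → ℝ))
      = eLpNorm v 2 volume := eLpNorm_congr_norm_ae (Eventually.of_forall fun x => RCLike.norm_conj _)
  rw [this]; exact hv.2

private lemma eLpNorm_conj' (v : (Fin n → ℝ) → ℂ) :
    eLpNorm (fun x => (starRingEnd ℂ) (v x)) 2 (volume : Measure (Fin n → ℝ))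
      = eLpNorm v 2 volume :=
  eLpNorm_congr_norm_ae (Eventually.of_forall fun x => RCLike.norm_conj _)

private lemma integrable_L2_mul {u v : (Fin n → ℝ) → ℂ}
    (hu : MemLp u 2 (volume : Measure (Fin n → ℝ)))
    (hv : MemLp v 2 (volume : Measure (Fin n → ℝ))) :
    Integrable (fun x => u x * v x) volume := by
  have h1 := memLp_conj hu
  have h := L2.integrable_inner (𝕜 := ℂ) (h1.toLp _) (hv.toLp _)
  refine h.congr ?_
  filter_upwards [h1.coeFn_toLp, hv.coeFn_toLp] with x hx1 hx2
  rw [RCLike.inner_apply, hx1, hx2]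
  simp [mul_comm]

private lemma holder_L2 {u v : (Fin n → ℝ) → ℂ}
    (hu : MemLp u 2 (volume : Measure (Fin n → ℝ)))
    (hv : MemLp v 2 (volume : Measure (Fin n → ℝ))) :
    ‖∫ x, u x * v x‖ ≤ (eLpNorm u 2 volume).toReal * (eLpNorm v 2 volume).toReal := by
  have h1 := memLp_conj hu
  have hi : (inner ℂ (h1.toLp _) (hv.toLp _) : ℂ) = ∫ x, u x * v x := by
    rw [L2.inner_def]
    refine integral_congr_ae ?_
    filter_upwards [h1.coeFn_toLp, hv.coeFn_toLp] with x hx1 hx2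
    rw [RCLike.inner_apply, hx1, hx2]
    simp [mul_comm]
  calc ‖∫ x, u x * v x‖ = ‖(inner ℂ (h1.toLp _) (hv.toLp _) : ℂ)‖ := by rw [hi]
    _ ≤ ‖h1.toLp _‖ * ‖hv.toLp _‖ := norm_inner_le_norm _ _
    _ ≤ _ := by
        rw [Lp.norm_toLp _ h1, Lp.norm_toLp _ hv, eLpNorm_conj']

private lemma norm_le_of_forall_cc (u : Lp ℂ 2 (volume : Measure (Fin n → ℝ))) {C : ℝ}
    (hC : 0 ≤ C)
    (h : ∀ g : (Fin n → ℝ) → ℂ, Continuous g → HasCompactSupport g →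
      ‖∫ x, (u : (Fin n → ℝ) → ℂ) x * g x‖ ≤ C * (eLpNorm g 2 volume).toReal) :
    ‖u‖ ≤ C := by
  have hu : MemLp (u : (Fin n → ℝ) → ℂ) 2 volume := Lp.memLp u
  set uf : (Fin n → ℝ) → ℂ := (u : (Fin n → ℝ) → ℂ) with huf_def
  set uc : (Fin n → ℝ) → ℂ := fun x => (starRingEnd ℂ) (uf x) with huc_def
  have huc : MemLp uc 2 volume := memLp_conj hu
  set N : ℝ := ‖u‖ with hN
  have hN0 : 0 ≤ N := norm_nonneg u
  have hNe : eLpNorm uf 2 volume = ENNReal.ofReal N := by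
    rw [hN, Lp.norm_def, ENNReal.ofReal_toReal (Lp.eLpNorm_ne_top u)]
  have hsq : ‖∫ x, uf x * uc x‖ = N ^ 2 := by
    have h1 : (inner ℂ u u : ℂ) = ∫ x, uf x * uc x := by
      rw [L2.inner_def]
      refine integral_congr_ae (Eventually.of_forall fun x => ?_)
      simp only [RCLike.inner_apply]; ring
    have h2 : (inner ℂ u u : ℂ) = (N : ℂ) ^ 2 := by
      rw [inner_self_eq_norm_sq_to_K]; norm_cast
    rw [← h1, h2]
    rw [← Complex.ofReal_pow, Complex.norm_real, Real.norm_of_nonneg (by positivity)]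
  have key : ∀ ε : ℝ, 0 < ε → N ^ 2 ≤ C * (N + ε) + N * ε := by
    intro ε hε
    obtain ⟨g, gsupp, hgd, gcont, gmem⟩ :=
      huc.exists_hasCompactSupport_eLpNorm_sub_le (by norm_num) (ε := ENNReal.ofReal ε)
        (by simp [hε, hε.ne'])
    have hd : MemLp (fun x => uc x - g x) 2 volume := huc.sub gmem
    have hgd' : eLpNorm (fun x => uc x - g x) 2 volume ≤ ENNReal.ofReal ε := hgd
    have hgdr : (eLpNorm (fun x => uc x - g x) 2 volume).toReal ≤ ε := by
      have := ENNReal.toReal_mono (by simp) hgd'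
      rwa [ENNReal.toReal_ofReal hε.le] at this
    have hsplit : ∫ x, uf x * uc x = (∫ x, uf x * g x) + ∫ x, uf x * (uc x - g x) := by
      rw [← integral_add (integrable_L2_mul hu gmem) (integrable_L2_mul hu hd)]
      refine integral_congr_ae (Eventually.of_forall fun x => ?_); ring
    have hgn : (eLpNorm g 2 volume).toReal ≤ N + ε := by
      have hg_eq : eLpNorm g 2 volume ≤ eLpNorm uc 2 volume + eLpNorm (fun x => uc x - g x) 2 volume := by
        have : g = (fun x => uc x - (uc x - g x)) := by funext x; ring
        calc eLpNorm g 2 volume = eLpNorm (fun x => uc x - (uc x - g x)) 2 volume := by rw [← this]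
          _ ≤ _ := eLpNorm_sub_le huc.1 hd.1 (by norm_num)
      have hucN : eLpNorm uc 2 volume = ENNReal.ofReal N := by
        have := eLpNorm_conj' uf
        rw [huc_def, this, hNe]
      have hgd' : eLpNorm (fun x => uc x - g x) 2 volume ≤ ENNReal.ofReal ε := by
        have : (fun x => uc x - g x) = uc - g := rfl
        rw [this]; exact hgd
      have h2 : eLpNorm uc 2 volume + eLpNorm (fun x => uc x - g x) 2 volume
          ≤ ENNReal.ofReal N + ENNReal.ofReal ε := by
        rw [hucN]
        exact add_le_add le_rfl hgd'
      have := ENNReal.toReal_mono (by simp) (hg_eq.trans h2)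
      rwa [ENNReal.toReal_add (by simp) (by simp), ENNReal.toReal_ofReal hN0,
        ENNReal.toReal_ofReal hε.le] at this
    calc N ^ 2 = ‖∫ x, uf x * uc x‖ := hsq.symm
      _ ≤ ‖∫ x, uf x * g x‖ + ‖∫ x, uf x * (uc x - g x)‖ := by
          rw [hsplit]; exact norm_add_le _ _
      _ ≤ C * (eLpNorm g 2 volume).toReal
          + (eLpNorm uf 2 volume).toReal * (eLpNorm (fun x => uc x - g x) 2 volume).toReal := by
          gcongr
          · exact h g gcont gsupp
          · exact holder_L2 hu hd
      _ ≤ C * (N + ε) + N * ε := by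
          rw [hNe, ENNReal.toReal_ofReal hN0]
          gcongr
  have hN2 : N ^ 2 ≤ C * N := by
    refine le_of_forall_pos_le_add fun δ hδ => ?_
    rcases le_or_gt (C + N) 0 with hcn | hcn
    · have hC0 : C = 0 := le_antisymm (by linarith) hC
      have hN00 : N = 0 := le_antisymm (by linarith) hN0
      simp only [hC0, hN00]
      nlinarith
    · have := key (δ / (C + N)) (by positivity)
      have heq : C * (N + δ / (C + N)) + N * (δ / (C + N)) = C * N + (C + N) * (δ / (C + N)) := by
        ring
      have hle : (C + N) * (δ / (C + N)) = δ := by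
        field_simp
      linarith
  rcases eq_or_lt_of_le hN0 with h0 | h0
  · rw [hN] at h0; linarith [h0]
  · nlinarith

-- pointwise complex algebra
private lemma zmap_eq (a d : Fin n → ℝ) (ζ : ℂ) (x : Fin n → ℝ) :
    (fun j => (x j : ℂ) + ((a j : ℂ) + ζ * (d j : ℂ)) * I)
      = fun j => (((x - ζ.im • d) j : ℝ) : ℂ) + (((a + ζ.re • d) j : ℝ) : ℂ) * I := by
  funext j
  simp only [Pi.sub_apply, Pi.add_apply, Pi.smul_apply, smul_eq_mul]
  apply Complex.ext <;>
    simp [Complex.add_re, Complex.add_im, Complex.mul_re, Complex.mul_im] <;> ring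

private lemma translate_memLp {g : (Fin n → ℝ) → ℂ} (gcont : Continuous g)
    (gsupp : HasCompactSupport g) (c : Fin n → ℝ) :
    MemLp (fun u => g (u + c)) 2 (volume : Measure (Fin n → ℝ)) := by
  have h1 : Continuous fun u : Fin n → ℝ => g (u + c) :=
    gcont.comp (continuous_id.add continuous_const)
  have h2 : HasCompactSupport fun u : Fin n → ℝ => g (u + c) :=
    gsupp.comp_homeomorph (Homeomorph.addRight c)
  exact h1.memLp_of_hasCompactSupport h2

private lemma translate_eLpNorm {g : (Fin n → ℝ) → ℂ} (gcont : Continuous g) (c : Fin n → ℝ) :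
    eLpNorm (fun u => g (u + c)) 2 (volume : Measure (Fin n → ℝ)) = eLpNorm g 2 volume :=
  eLpNorm_comp_measurePreserving gcont.aestronglyMeasurable (measurePreserving_add_right volume c)

private lemma rep_bound (B : Set (Fin n → ℝ)) (f : (Fin n → ℂ) → ℂ)
    (G : (Fin n → ℝ) → Lp ℂ 2 (volume : Measure (Fin n → ℝ)))
    (hGf : ∀ y ∈ B, (G y : (Fin n → ℝ) → ℂ) =ᵐ[volume]
      fun x => f (fun j => (x j : ℂ) + (y j : ℂ) * I))
    (a d : Fin n → ℝ) {g : (Fin n → ℝ) → ℂ} (gcont : Continuous g)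
    (gsupp : HasCompactSupport g) (ζ : ℂ) (hy : a + ζ.re • d ∈ B) :
    (∫ x, f (fun j => (x j : ℂ) + ((a j : ℂ) + ζ * (d j : ℂ)) * I) * g x)
      = ∫ u, (G (a + ζ.re • d) : (Fin n → ℝ) → ℂ) u * g (u + ζ.im • d) := by
  set y : Fin n → ℝ := a + ζ.re • d with hy_def
  set c : Fin n → ℝ := ζ.im • d with hc_def
  have hmp : MeasurePreserving (fun x : Fin n → ℝ => x - c) volume volume :=
    measurePreserving_sub_right volume c
  have step1 : (∫ x, f (fun j => (x j : ℂ) + ((a j : ℂ) + ζ * (d j : ℂ)) * I) * g x)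
      = ∫ x, (G y : (Fin n → ℝ) → ℂ) (x - c) * g x := by
    refine integral_congr_ae ?_
    have hae : (fun x : Fin n → ℝ => (G y : (Fin n → ℝ) → ℂ) (x - c))
        =ᵐ[volume] fun x => f (fun j => (((x - c) j : ℝ) : ℂ) + ((y j : ℝ) : ℂ) * I) := by
      exact hmp.quasiMeasurePreserving.ae_eq_comp (hGf y hy)
    filter_upwards [hae] with x hx
    rw [zmap_eq a d ζ x, ← hc_def, ← hy_def, ← hx]
  have step2 : (∫ x, (G y : (Fin n → ℝ) → ℂ) (x - c) * g x)
      = ∫ u, (G y : (Fin n → ℝ) → ℂ) u * g (u + c) := by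
    have := integral_sub_right_eq_self
      (fun u => (G y : (Fin n → ℝ) → ℂ) u * g (u + c)) c (μ := volume)
    rw [← this]
    refine integral_congr_ae (Eventually.of_forall fun x => ?_)
    simp [sub_add_cancel]
  rw [step1, step2]

private lemma H_differentiableAt (B : Set (Fin n → ℝ)) (hBopen : IsOpen B)
    (f : (Fin n → ℂ) → ℂ)
    (hf : DifferentiableOn ℂ f {z : Fin n → ℂ | (fun j => (z j).im) ∈ B})
    (a d : Fin n → ℝ) {g : (Fin n → ℝ) → ℂ} (gcont : Continuous g)
    (gsupp : HasCompactSupport g) {ζ₀ : ℂ} (hζ₀ : a + ζ₀.re • d ∈ B) :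
    DifferentiableAt ℂ
      (fun ζ => ∫ x, f (fun j => (x j : ℂ) + ((a j : ℂ) + ζ * (d j : ℂ)) * I) * g x) ζ₀ := by
  classical
  set T : Set (Fin n → ℂ) := {z : Fin n → ℂ | (fun j => (z j).im) ∈ B} with hT_def
  have hTopen : IsOpen T :=
    hBopen.preimage (continuous_pi fun j => Complex.continuous_im.comp (continuous_apply j))
  set zmap : ℂ → (Fin n → ℝ) → (Fin n → ℂ) :=
    fun ζ x => fun j => (x j : ℂ) + ((a j : ℂ) + ζ * (d j : ℂ)) * I with hzmap_def
  have hzmem : ∀ (ζ : ℂ) (x : Fin n → ℝ), a + ζ.re • d ∈ B → zmap ζ x ∈ T := by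
    intro ζ x h
    have : (fun j => ((zmap ζ x) j).im) = a + ζ.re • d := by
      funext j
      simp [hzmap_def, Complex.add_im, Complex.mul_im, Complex.mul_re]
    simpa [hT_def, this] using h
  set S : Set ℂ := {ζ : ℂ | a + ζ.re • d ∈ B} with hS_def
  have hSopen : IsOpen S := by
    have : Continuous fun ζ : ℂ => a + ζ.re • d :=
      continuous_const.add ((Complex.continuous_re).smul continuous_const)
    exact hBopen.preimage this
  have hζ₀S : ζ₀ ∈ S := hζ₀
  obtain ⟨r, hr, hrS⟩ := Metric.isOpen_iff.mp hSopen ζ₀ hζ₀S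
  set ε : ℝ := r / 4 with hε_def
  have hε : 0 < ε := by positivity
  have hball : closedBall ζ₀ (2 * ε) ⊆ S := by
    refine (closedBall_subset_ball ?_).trans hrS
    rw [hε_def]; linarith
  set K : Set (Fin n → ℝ) := tsupport g with hK_def
  have hKcomp : IsCompact K := gsupp
  -- joint continuity of zmap
  have hzcont : Continuous fun p : ℂ × (Fin n → ℝ) => zmap p.1 p.2 := by
    refine continuous_pi fun j => ?_
    refine ((Complex.continuous_ofReal.comp ((continuous_apply j).comp continuous_snd)).add
      ((continuous_const.add (continuous_fst.mul continuous_const)).mul continuous_const))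
  set T₀ : Set (Fin n → ℂ) :=
    (fun p : ℂ × (Fin n → ℝ) => zmap p.1 p.2) '' (closedBall ζ₀ (2 * ε) ×ˢ K) with hT₀_def
  have hT₀comp : IsCompact T₀ :=
    ((isCompact_closedBall _ _).prod hKcomp).image hzcont
  have hT₀T : T₀ ⊆ T := by
    rintro z ⟨⟨ζ, x⟩, ⟨hζ, _⟩, rfl⟩
    exact hzmem ζ x (hball hζ)
  obtain ⟨M₀, hM₀⟩ := hT₀comp.exists_bound_of_continuousOn (hf.continuousOn.mono hT₀T)
  set M : ℝ := max M₀ 0 with hM_def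
  have hM : ∀ z ∈ T₀, ‖f z‖ ≤ M := fun z hz => (hM₀ z hz).trans (le_max_left _ _)
  have hM0 : 0 ≤ M := le_max_right _ _
  -- differentiability of the one-variable slice maps
  have φdiff : ∀ (x : Fin n → ℝ), ∀ ζ ∈ S, DifferentiableAt ℂ (fun w => f (zmap w x)) ζ := by
    intro x ζ hζ
    have hz : DifferentiableAt ℂ (fun w => zmap w x) ζ := by
      have heq : (fun w => zmap w x)
          = fun w => (fun j => (x j : ℂ) + (a j : ℂ) * I) + w • (fun j => (d j : ℂ) * I) := by
        funext w j
        simp [hzmap_def, Pi.add_apply, Pi.smul_apply, smul_eq_mul]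
        ring
      rw [heq]
      exact (((hasDerivAt_id ζ).smul_const _).const_add _).differentiableAt
    exact (hf.differentiableAt (hTopen.mem_nhds (hzmem ζ x hζ))).comp ζ hz
  have hballS : ball ζ₀ ε ⊆ S := fun w hw => hball (by
    rw [mem_closedBall]
    rw [mem_ball] at hw
    nlinarith [dist_nonneg (x := w) (y := ζ₀)])
  set F : ℂ → (Fin n → ℝ) → ℂ := fun ζ x => f (zmap ζ x) * g x with hF_def
  set F' : ℂ → (Fin n → ℝ) → ℂ :=
    fun ζ x => deriv (fun w => f (zmap w x)) ζ * g x with hF'_def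
  have h_diff : ∀ (x : Fin n → ℝ), ∀ ζ ∈ ball ζ₀ ε, HasDerivAt (F · x) (F' ζ x) ζ := by
    intro x ζ hζ
    exact ((φdiff x ζ (hballS hζ)).hasDerivAt).mul_const (g x)
  -- the Cauchy estimate bound
  have h_bound : ∀ (x : Fin n → ℝ), ∀ ζ ∈ ball ζ₀ ε, ‖F' ζ x‖ ≤ M / ε * ‖g x‖ := by
    intro x ζ hζ
    by_cases hgx : g x = 0
    · simp [hF'_def, hgx]
    · have hxK : x ∈ K := subset_tsupport g (by simpa [Function.mem_support] using hgx)
      have hsub : closedBall ζ ε ⊆ closedBall ζ₀ (2 * ε) := by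
        intro w hw
        rw [mem_closedBall] at hw ⊢
        rw [mem_ball] at hζ
        have := dist_triangle w ζ ζ₀
        linarith
      have hd : DiffContOnCl ℂ (fun w => f (zmap w x)) (ball ζ ε) := by
        constructor
        · intro w hw
          exact (φdiff x w (hball (hsub (ball_subset_closedBall hw)))).differentiableWithinAt
        · refine ContinuousOn.mono ?_ (closure_ball_subset_closedBall)
          intro w hw
          exact ((φdiff x w (hball (hsub hw))).continuousAt).continuousWithinAt
      have hsphere : ∀ w ∈ sphere ζ ε, ‖f (zmap w x)‖ ≤ M := by
        intro w hw
        refine hM _ ⟨(w, x), ⟨hsub (sphere_subset_closedBall hw), hxK⟩, rfl⟩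
      have hderiv : ‖deriv (fun w => f (zmap w x)) ζ‖ ≤ M / ε :=
        norm_deriv_le_of_forall_mem_sphere_norm_le hε hd hsphere
      rw [hF'_def, norm_mul]
      exact mul_le_mul_of_nonneg_right hderiv (norm_nonneg _)
  -- measurability of F near ζ₀
  have hFcont : ∀ ζ ∈ S, Continuous (F ζ) := by
    intro ζ hζ
    refine Continuous.mul ?_ gcont
    exact (hf.continuousOn).comp_continuous (hzcont.comp (Continuous.prodMk_right ζ))
      (fun x => hzmem ζ x hζ)
  have hF_meas : ∀ᶠ ζ in 𝓝 ζ₀, AEStronglyMeasurable (F ζ) volume := by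
    filter_upwards [hSopen.mem_nhds hζ₀S] with ζ hζ
    exact (hFcont ζ hζ).aestronglyMeasurable
  have hF_supp : ∀ ζ, Function.support (F ζ) ⊆ K := by
    intro ζ x hx
    refine subset_tsupport g ?_
    simp only [Function.mem_support, hF_def] at hx ⊢
    intro h0; exact hx (by rw [h0, mul_zero])
  have hF_int : Integrable (F ζ₀) volume := by
    refine (hFcont ζ₀ hζ₀S).integrable_of_hasCompactSupport ?_
    exact HasCompactSupport.intro hKcomp fun x hx =>
      Function.notMem_support.mp (fun hs => hx (hF_supp ζ₀ hs))
  -- measurability of F' ζ₀ via difference quotients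
  have hF'_meas : AEStronglyMeasurable (F' ζ₀) volume := by
    set sq : ℕ → ℂ := fun m => ζ₀ + ((ε / (2 * (m + 1)) : ℝ) : ℂ) with hsq_def
    have hsqS : ∀ m, sq m ∈ S := by
      intro m
      refine hball ?_
      rw [mem_closedBall, hsq_def]
      have h1 : dist (ζ₀ + ((ε / (2 * ((m : ℝ) + 1)) : ℝ) : ℂ)) ζ₀ = ε / (2 * ((m : ℝ) + 1)) := by
        rw [dist_eq_norm, add_sub_cancel_left, Complex.norm_real,
          Real.norm_of_nonneg (by positivity)]
      rw [h1]
      have hpos : (0:ℝ) < 2 * ((m:ℝ) + 1) := by positivity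
      rw [div_le_iff₀ hpos]
      nlinarith
    have hsqne : ∀ m, sq m ≠ ζ₀ := by
      intro m
      have hne : ((ε / (2 * ((m : ℝ) + 1)) : ℝ) : ℂ) ≠ 0 := by
        exact_mod_cast ne_of_gt (by positivity : (0:ℝ) < ε / (2 * ((m:ℝ) + 1)))
      rw [hsq_def]
      simpa [add_eq_left] using hne
    have hsqtend : Tendsto sq atTop (𝓝[≠] ζ₀) := by
      rw [tendsto_nhdsWithin_iff]
      constructor
      · rw [hsq_def]
        have : Tendsto (fun m : ℕ => ε / (2 * ((m:ℝ) + 1))) atTop (𝓝 0) := by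
          apply Tendsto.div_atTop tendsto_const_nhds
          apply Tendsto.const_mul_atTop (by norm_num : (0:ℝ) < 2)
          exact tendsto_natCast_atTop_atTop.atTop_add tendsto_const_nhds
        have h2 : Tendsto (fun m : ℕ => ((ε / (2 * ((m:ℝ) + 1)) : ℝ) : ℂ)) atTop
            (𝓝 (((0:ℝ) : ℂ))) := (Complex.continuous_ofReal.tendsto 0).comp this
        rw [Complex.ofReal_zero] at h2
        simpa using (tendsto_const_nhds (x := ζ₀)).add h2
      · exact Eventually.of_forall fun m => hsqne m
    have hψmeas : ∀ m : ℕ, AEStronglyMeasurable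
        (fun x => (sq m - ζ₀)⁻¹ * (F (sq m) x - F ζ₀ x)) volume := by
      intro m
      exact (continuous_const.mul (((hFcont _ (hsqS m)).sub (hFcont _ hζ₀S)))).aestronglyMeasurable
    refine aestronglyMeasurable_of_tendsto_ae atTop hψmeas (Eventually.of_forall fun x => ?_)
    have hda : HasDerivAt (F · x) (F' ζ₀ x) ζ₀ := h_diff x ζ₀ (mem_ball_self hε)
    have := (hasDerivAt_iff_tendsto_slope.mp hda).comp hsqtend
    refine this.congr fun m => ?_
    simp only [Function.comp_apply, slope_def_field, div_eq_inv_mul]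
  have key := hasDerivAt_integral_of_dominated_loc_of_deriv_le (F := F) (F' := F')
    (bound := fun x => M / ε * ‖g x‖) (ball_mem_nhds ζ₀ hε) hF_meas hF_int hF'_meas
    (Eventually.of_forall h_bound)
    (((gcont.norm).integrable_of_hasCompactSupport gsupp.norm).const_mul (M / ε))
    (Eventually.of_forall h_diff)
  exact key.2.differentiableAt

private lemma segment_bound (B : Set (Fin n → ℝ)) (hBopen : IsOpen B)
    (f : (Fin n → ℂ) → ℂ)
    (hf : DifferentiableOn ℂ f {z : Fin n → ℂ | (fun j => (z j).im) ∈ B})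
    (G : (Fin n → ℝ) → Lp ℂ 2 (volume : Measure (Fin n → ℝ)))
    (hGf : ∀ y ∈ B, (G y : (Fin n → ℝ) → ℂ) =ᵐ[volume]
      fun x => f (fun j => (x j : ℂ) + (y j : ℂ) * I))
    (a b : Fin n → ℝ) (hseg : ∀ s ∈ Set.Icc (0:ℝ) 1, a + s • (b - a) ∈ B)
    (M : ℝ) (hM : ∀ s ∈ Set.Icc (0:ℝ) 1, ‖G (a + s • (b - a))‖ ≤ M)
    {s : ℝ} (hs : s ∈ Set.Icc (0:ℝ) 1) :
    ‖G (a + s • (b - a))‖ ≤ max ‖G a‖ ‖G b‖ := by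
  classical
  rcases eq_or_lt_of_le hs.1 with h0 | h0
  · rw [← h0]; simpa using le_max_left _ _
  rcases eq_or_lt_of_le hs.2 with h1 | h1
  · rw [h1]
    have : a + (1:ℝ) • (b - a) = b := by funext j; simp
    rw [this]; exact le_max_right _ _
  set d : Fin n → ℝ := b - a with hd_def
  have ha : a ∈ B := by simpa using hseg 0 (by norm_num)
  have hbB : b ∈ B := by
    have h := hseg 1 (by norm_num)
    have e : a + (1:ℝ) • (b - a) = b := by funext j; simp
    rwa [e] at h
  have hCnn : (0:ℝ) ≤ max ‖G a‖ ‖G b‖ := le_trans (norm_nonneg _) (le_max_left _ _)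
  refine norm_le_of_forall_cc _ hCnn ?_
  intro g gcont gsupp
  set gn : ℝ := (eLpNorm g 2 (volume : Measure (Fin n → ℝ))).toReal with hgn_def
  have hgn0 : 0 ≤ gn := ENNReal.toReal_nonneg
  set H : ℂ → ℂ :=
    fun ζ => ∫ x, f (fun j => (x j : ℂ) + ((a j : ℂ) + ζ * (d j : ℂ)) * I) * g x with hH_def
  have hmemB : ∀ ζ : ℂ, ζ.re ∈ Set.Icc (0:ℝ) 1 → a + ζ.re • d ∈ B := fun ζ h => hseg _ h
  -- bound for H on the closed strip
  have Hbound : ∀ ζ : ℂ, a + ζ.re • d ∈ B → ‖H ζ‖ ≤ ‖G (a + ζ.re • d)‖ * gn := by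
    intro ζ hy
    have hHζ : H ζ = ∫ u, (G (a + ζ.re • d) : (Fin n → ℝ) → ℂ) u * g (u + ζ.im • d) :=
      rep_bound B f G hGf a d gcont gsupp ζ hy
    rw [hHζ]
    have h1 := holder_L2 (Lp.memLp (G (a + ζ.re • d))) (translate_memLp gcont gsupp (ζ.im • d))
    rwa [translate_eLpNorm gcont, ← hgn_def, ← Lp.norm_def] at h1
  -- differentiability on the strip, continuity on the closed strip
  have hdiffS : ∀ ζ : ℂ, a + ζ.re • d ∈ B → DifferentiableAt ℂ H ζ := by
    intro ζ hζ
    exact H_differentiableAt B hBopen f hf a d gcont gsupp hζ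
  have hDC : DiffContOnCl ℂ H (HadamardThreeLines.verticalStrip 0 1) := by
    constructor
    · intro ζ hζ
      exact (hdiffS ζ (hmemB ζ ⟨le_of_lt hζ.1, le_of_lt hζ.2⟩)).differentiableWithinAt
    · have hsub : closure (HadamardThreeLines.verticalStrip 0 1)
          ⊆ HadamardThreeLines.verticalClosedStrip 0 1 := by
        rw [HadamardThreeLines.verticalStrip, HadamardThreeLines.verticalClosedStrip,
          ← closure_Ioo zero_ne_one, ← closure_preimage_re]
      refine ContinuousOn.mono ?_ hsub
      intro ζ hζ
      exact (hdiffS ζ (hmemB ζ hζ)).continuousAt.continuousWithinAt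
  have hBdd : BddAbove ((norm ∘ H) '' HadamardThreeLines.verticalClosedStrip 0 1) := by
    refine ⟨M * gn, ?_⟩
    rintro v ⟨ζ, hζ, rfl⟩
    have h1 := Hbound ζ (hmemB ζ hζ)
    refine h1.trans ?_
    exact mul_le_mul_of_nonneg_right (hM _ hζ) hgn0
  have hedge0 : ∀ ζ ∈ re ⁻¹' {(0:ℝ)}, ‖H ζ‖ ≤ ‖G a‖ * gn := by
    intro ζ hζ
    have hre : ζ.re = 0 := hζ
    have hrw : a + ζ.re • d = a := by rw [hre]; funext j; simp
    have := Hbound ζ (by rw [hrw]; exact ha)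
    rwa [hrw] at this
  have hedge1 : ∀ ζ ∈ re ⁻¹' {(1:ℝ)}, ‖H ζ‖ ≤ ‖G b‖ * gn := by
    intro ζ hζ
    have hre : ζ.re = 1 := hζ
    have hrw : a + ζ.re • d = b := by
      rw [hre]; funext j; simp [hd_def]
    have := Hbound ζ (by rw [hrw]; exact hbB)
    rwa [hrw] at this
  have hz : (s : ℂ) ∈ HadamardThreeLines.verticalClosedStrip 0 1 := by
    simp only [HadamardThreeLines.verticalClosedStrip, Set.mem_preimage, ofReal_re]
    exact hs
  have h3 := HadamardThreeLines.norm_le_interp_of_mem_verticalClosedStrip' (f := H) zero_lt_one hz hDC hBdd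
    hedge0 hedge1
  rw [ofReal_re] at h3
  simp only [sub_zero, div_one] at h3
  -- identify H s with the pairing against G y_s
  have hys : a + s • d ∈ B := hseg s hs
  have hHs : H (s : ℂ) = ∫ x, (G (a + s • d) : (Fin n → ℝ) → ℂ) x * g x := by
    have hHζ : H (s:ℂ) = ∫ u, (G (a + (s:ℂ).re • d) : (Fin n → ℝ) → ℂ) u * g (u + (s:ℂ).im • d) :=
      rep_bound B f G hGf a d gcont gsupp (s:ℂ) (by rw [ofReal_re]; exact hys)
    rw [hHζ, ofReal_re, ofReal_im]
    refine integral_congr_ae (Eventually.of_forall fun u => ?_)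
    simp
  -- final rpow estimate
  have hfin : (‖G a‖ * gn) ^ (1 - s) * (‖G b‖ * gn) ^ s ≤ max ‖G a‖ ‖G b‖ * gn := by
    set X : ℝ := max ‖G a‖ ‖G b‖ * gn with hX_def
    have hX0 : 0 ≤ X := mul_nonneg hCnn hgn0
    have hax : ‖G a‖ * gn ≤ X := mul_le_mul_of_nonneg_right (le_max_left _ _) hgn0
    have hbx : ‖G b‖ * gn ≤ X := mul_le_mul_of_nonneg_right (le_max_right _ _) hgn0
    have hs1 : (0:ℝ) ≤ 1 - s := by linarith
    rcases eq_or_lt_of_le hX0 with hX | hX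
    · have h1 : ‖G a‖ * gn = 0 := le_antisymm (by rw [← hX] at hax; exact hax)
        (mul_nonneg (norm_nonneg _) hgn0)
      rw [h1, Real.zero_rpow (by intro hc; rw [sub_eq_zero] at hc; linarith), zero_mul, ← hX]
    · calc (‖G a‖ * gn) ^ (1 - s) * (‖G b‖ * gn) ^ s
          ≤ X ^ (1 - s) * X ^ s :=
            mul_le_mul (Real.rpow_le_rpow (mul_nonneg (norm_nonneg _) hgn0) hax hs1)
              (Real.rpow_le_rpow (mul_nonneg (norm_nonneg _) hgn0) hbx hs.1)
              (Real.rpow_nonneg (mul_nonneg (norm_nonneg _) hgn0) _)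
              (Real.rpow_nonneg hX0 _)
        _ = X := by
            rw [← Real.rpow_add hX]
            norm_num
  rw [hHs] at h3
  exact h3.trans hfin


private lemma combo_pos {x y α β : ℝ} (hx : 0 < x) (hy : 0 < y) (hα : 0 ≤ α) (hβ : 0 ≤ β)
    (hαβ : α + β = 1) : 0 < α * x + β * y := by
  rcases eq_or_lt_of_le hα with h | h
  · rw [← h] at hαβ ⊢; simp at hαβ ⊢; nlinarith
  · nlinarith

private lemma combo_lt_one {x y α β : ℝ} (hx : x < 1) (hy : y < 1) (hα : 0 ≤ α) (hβ : 0 ≤ β)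
    (hαβ : α + β = 1) : α * x + β * y < 1 := by
  rcases eq_or_lt_of_le hα with h | h
  · rw [← h] at hαβ ⊢; simp at hαβ ⊢; nlinarith
  · nlinarith [mul_le_mul_of_nonneg_left hy.le hβ]


end Stmt7Aux

theorem stmt7 (n : ℕ) (f : (Fin n → ℂ) → ℂ)
    (B : Set (Fin n → ℝ))
    (hB : B = {y : Fin n → ℝ | (∀ j, 0 < y j ∧ y j < 1) ∧
      0 < (∑ j, y j) ∧ (∑ j, y j) < 1})
    (hf : DifferentiableOn ℂ f {z : (Fin n → ℂ) | (fun j => (z j).im) ∈ B})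
    (G : (Fin n → ℝ) → Lp ℂ 2 (volume : Measure (Fin n → ℝ)))
    (hGcont : ContinuousOn G (closure B))
    (hGf : ∀ y ∈ B,
      (G y : (Fin n → ℝ) → ℂ) =ᵐ[volume] fun x => f (fun j => (x j : ℂ) + (y j : ℂ) * I))
    (hbd : ∀ k : Fin n, ∀ t ∈ Set.Ioo (0 : ℝ) 1, ‖G (Pi.single k t)‖ ≤ 1) :
    ∀ y ∈ closure B, ‖G y‖ ≤ 1 := by
  classical
  have hsum_cont : Continuous fun y : Fin n → ℝ => ∑ j, y j :=
    continuous_finset_sum _ fun j _ => continuous_apply j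
  -- basic facts about B
  have hBopen : IsOpen B := by
    rw [hB]
    have h1 : IsOpen {y : Fin n → ℝ | ∀ j, 0 < y j ∧ y j < 1} := by
      have : {y : Fin n → ℝ | ∀ j, 0 < y j ∧ y j < 1}
          = ⋂ j, ((fun y : Fin n → ℝ => y j) ⁻¹' Set.Ioo 0 1) := by
        ext y; simp [Set.mem_iInter, Set.mem_Ioo]
      rw [this]
      exact isOpen_iInter_of_finite fun j => (isOpen_Ioo).preimage (continuous_apply j)
    have h2 : IsOpen {y : Fin n → ℝ | 0 < ∑ j, y j ∧ (∑ j, y j) < 1} :=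
      (isOpen_Ioo).preimage hsum_cont
    exact h1.inter h2
  have hBconv : Convex ℝ B := by
    rw [hB]
    intro x hx y hy α β hα hβ hαβ
    have hev : ∀ j, (α • x + β • y) j = α * x j + β * y j := by
      intro j; simp [Pi.add_apply, Pi.smul_apply, smul_eq_mul]
    have hsum : (∑ j, (α • x + β • y) j) = α * (∑ j, x j) + β * (∑ j, y j) := by
      simp only [hev]
      rw [Finset.sum_add_distrib, ← Finset.mul_sum, ← Finset.mul_sum]
    refine ⟨fun j => ?_, ?_, ?_⟩
    · rw [hev j]
      exact ⟨combo_pos (hx.1 j).1 (hy.1 j).1 hα hβ hαβ,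
        combo_lt_one (hx.1 j).2 (hy.1 j).2 hα hβ hαβ⟩
    · rw [hsum]; exact combo_pos hx.2.1 hy.2.1 hα hβ hαβ
    · rw [hsum]; exact combo_lt_one hx.2.2 hy.2.2 hα hβ hαβ
  have hclconv : Convex ℝ (closure B) := hBconv.closure
  have hclcomp : IsCompact (closure B) := by
    refine IsCompact.of_isClosed_subset
      (isCompact_univ_pi fun _ => isCompact_Icc (a := (0:ℝ)) (b := 1)) isClosed_closure ?_
    refine closure_minimal ?_ (isClosed_set_pi fun _ _ => isClosed_Icc)
    rw [hB]
    intro y hy j _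
    exact ⟨(hy.1 j).1.le, (hy.1 j).2.le⟩
  rcases Set.eq_empty_or_nonempty B with hBe | ⟨y₀, hy₀⟩
  · intro y hy
    rw [hBe, closure_empty] at hy
    exact absurd hy (Set.notMem_empty y)
  -- global bound M on closure B
  have hclne : (closure B).Nonempty := ⟨y₀, subset_closure hy₀⟩
  obtain ⟨zM, hzM, hzMmax⟩ := hclcomp.exists_isMaxOn hclne
    (continuous_norm.comp_continuousOn hGcont)
  set M : ℝ := ‖G zM‖ with hM_def
  -- quasiconvexity on the closure
  have hqc : ∀ v ∈ closure B, ∀ w ∈ closure B, ∀ t ∈ Set.Icc (0:ℝ) 1,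
      ‖G (v + t • (w - v))‖ ≤ max ‖G v‖ ‖G w‖ := by
    intro v hv w hw t ht
    obtain ⟨vm, hvmB, hvml⟩ := mem_closure_iff_seq_limit.mp hv
    obtain ⟨wm, hwmB, hwml⟩ := mem_closure_iff_seq_limit.mp hw
    have hsegm : ∀ m : ℕ, ∀ s ∈ Set.Icc (0:ℝ) 1, vm m + s • (wm m - vm m) ∈ B := by
      intro m s hsm
      have heq : vm m + s • (wm m - vm m) = (1 - s) • vm m + s • wm m := by
        funext j; simp [Pi.add_apply, Pi.smul_apply, Pi.sub_apply, smul_eq_mul]; ring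
      rw [heq]
      exact hBconv (hvmB m) (hwmB m) (by linarith [hsm.2]) hsm.1 (by ring)
    have hbm : ∀ m : ℕ, ‖G (vm m + t • (wm m - vm m))‖ ≤ max ‖G (vm m)‖ ‖G (wm m)‖ := by
      intro m
      refine segment_bound B hBopen f hf G hGf (vm m) (wm m) (hsegm m) M ?_ ht
      intro s hsm
      exact hzMmax (subset_closure (hsegm m s hsm))
    -- pass to the limit
    have hcont_at : ∀ z ∈ closure B, ∀ (p : ℕ → Fin n → ℝ), (∀ m, p m ∈ closure B) →
        Tendsto p atTop (𝓝 z) → Tendsto (fun m => ‖G (p m)‖) atTop (𝓝 ‖G z‖) := by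
      intro z hz p hp hpl
      have h1 : Tendsto p atTop (𝓝[closure B] z) :=
        tendsto_nhdsWithin_iff.mpr ⟨hpl, Eventually.of_forall hp⟩
      exact (continuous_norm.tendsto _).comp ((hGcont.continuousWithinAt hz).tendsto.comp h1)
    have hseq_lim : Tendsto (fun m => vm m + t • (wm m - vm m)) atTop (𝓝 (v + t • (w - v))) :=
      (hvml.add (((hwml.sub hvml)).const_smul t))
    have hseq_mem : ∀ m, vm m + t • (wm m - vm m) ∈ closure B :=
      fun m => subset_closure (hsegm m t ht)
    have hL : Tendsto (fun m => ‖G (vm m + t • (wm m - vm m))‖) atTop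
        (𝓝 ‖G (v + t • (w - v))‖) :=
      hcont_at _ (isClosed_closure.mem_of_tendsto hseq_lim (Eventually.of_forall hseq_mem))
        _ hseq_mem hseq_lim
    have hR : Tendsto (fun m => max ‖G (vm m)‖ ‖G (wm m)‖) atTop (𝓝 (max ‖G v‖ ‖G w‖)) :=
      (hcont_at v hv vm (fun m => subset_closure (hvmB m)) hvml).max
        (hcont_at w hw wm (fun m => subset_closure (hwmB m)) hwml)
    exact le_of_tendsto_of_tendsto' hL hR hbm
  -- vertices
  have hn : 0 < n := by
    rcases Nat.eq_zero_or_pos n with h | h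
    · exfalso
      rw [hB] at hy₀
      have := hy₀.2.1
      subst h
      simp at this
    · exact h
  have hsingle_cont : ∀ k : Fin n, Continuous fun t : ℝ => (Pi.single k t : Fin n → ℝ) := by
    intro k
    refine continuous_pi fun j => ?_
    by_cases hj : j = k
    · subst hj; simpa [Pi.single_apply] using continuous_id'
    · simp only [Pi.single_apply]
      have : (fun t : ℝ => if j = k then t else 0) = fun _ => (0:ℝ) := by
        funext t; simp [hj]
      rw [this]; exact continuous_const
  have hsingle_mem : ∀ k : Fin n, ∀ t ∈ Set.Ioo (0:ℝ) 1,
      (Pi.single k t : Fin n → ℝ) ∈ closure B := by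
    intro k t ht
    set δ : ℝ := (1 - t) / (n + 1) with hδ_def
    have hδpos : 0 < δ := by
      rw [hδ_def]
      have : (0:ℝ) < 1 - t := by linarith [ht.2]
      positivity
    set p : ℝ → Fin n → ℝ := fun ε => fun j => if j = k then t else ε with hp_def
    have hpmem : ∀ ε ∈ Set.Ioo (0:ℝ) δ, p ε ∈ B := by
      intro ε hε
      have hεδ : ε < δ := hε.2
      have hε0 : 0 < ε := hε.1
      have hδ1 : δ ≤ 1 - t := by
        rw [hδ_def]
        rw [div_le_iff₀ (by positivity)]
        nlinarith [sub_pos.mpr ht.2, (Nat.cast_nonneg n : (0:ℝ) ≤ n)]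
      have hε1 : ε < 1 := by nlinarith [ht.1]
      have hsum_eq : (∑ j, p ε j) = (∑ j ∈ Finset.univ.erase k, p ε j) + p ε k :=
        (Finset.sum_erase_add _ _ (Finset.mem_univ k)).symm
      have hsum_er : (∑ j ∈ Finset.univ.erase k, p ε j) = (n - 1 : ℕ) * ε := by
        rw [Finset.sum_congr rfl (fun j hj => ?_), Finset.sum_const, nsmul_eq_mul,
          Finset.card_erase_of_mem (Finset.mem_univ k), Finset.card_univ, Fintype.card_fin]
        simp [hp_def, Finset.ne_of_mem_erase hj]
      have hcard : ((n - 1 : ℕ) : ℝ) ≤ (n : ℝ) := by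
        exact_mod_cast Nat.sub_le n 1
      have hsum_lt : (∑ j, p ε j) < 1 := by
        rw [hsum_eq, hsum_er]
        have h1 : p ε k = t := by simp [hp_def]
        rw [h1]
        have h2 : ((n - 1 : ℕ) : ℝ) * ε ≤ (n : ℝ) * ε :=
          mul_le_mul_of_nonneg_right hcard hε0.le
        have h3 : (n : ℝ) * ε < (n : ℝ) * δ + δ := by
          rcases Nat.eq_zero_or_pos n with h | h
          · simp [h]; linarith
          · have hnp : (0:ℝ) < n := by exact_mod_cast h
            nlinarith [mul_pos hnp (sub_pos.mpr hεδ)]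
        have h4 : (n : ℝ) * δ + δ = 1 - t := by
          rw [hδ_def]; field_simp
        linarith
      have hsum_pos : 0 < ∑ j, p ε j := by
        rw [hsum_eq, hsum_er]
        have h1 : p ε k = t := by simp [hp_def]
        rw [h1]
        have : (0:ℝ) ≤ ((n - 1 : ℕ) : ℝ) * ε := by positivity
        linarith [ht.1]
      rw [hB]
      refine ⟨fun j => ?_, hsum_pos, hsum_lt⟩
      by_cases hj : j = k
      · simp [hp_def, hj, ht.1, ht.2]
      · simp only [hp_def, hj, if_false]
        exact ⟨hε0, hε1⟩
    have hptend : Tendsto p (𝓝[>] (0:ℝ)) (𝓝 (Pi.single k t)) := by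
      have hc : Continuous p := by
        refine continuous_pi fun j => ?_
        by_cases hj : j = k
        · simp only [hp_def, hj, if_true]; exact continuous_const
        · simp only [hp_def, hj, if_false]; exact continuous_id
      have h0 : p 0 = Pi.single k t := by
        funext j; simp [hp_def, Pi.single_apply]
      have h1 := (hc.tendsto 0).mono_left (nhdsWithin_le_nhds (s := Set.Ioi (0:ℝ)))
      rwa [h0] at h1
    have hIoo : Set.Ioo (0:ℝ) δ ∈ 𝓝[>] (0:ℝ) := Ioo_mem_nhdsGT_of_mem ⟨le_refl 0, hδpos⟩
    exact mem_closure_of_tendsto hptend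
      (Filter.mem_of_superset hIoo fun ε hε => hpmem ε hε)
  -- vertex norm bounds by taking limits along single k t
  have hvert : ∀ (k : Fin n) (t₀ : ℝ), t₀ ∈ Set.Icc (0:ℝ) 1 →
      (Pi.single k t₀ : Fin n → ℝ) ∈ closure B ∧ ‖G (Pi.single k t₀)‖ ≤ 1 := by
    intro k t₀ ht₀
    have hne : (𝓝[Set.Ioo (0:ℝ) 1] t₀).NeBot := by
      refine mem_closure_iff_nhdsWithin_neBot.mp ?_
      rw [closure_Ioo (by norm_num : (0:ℝ) ≠ 1)]
      exact ht₀
    have hqtend : Tendsto (fun t => (Pi.single k t : Fin n → ℝ)) (𝓝[Set.Ioo (0:ℝ) 1] t₀)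
        (𝓝 (Pi.single k t₀)) :=
      ((hsingle_cont k).tendsto t₀).mono_left nhdsWithin_le_nhds
    have hev_mem : ∀ᶠ t in 𝓝[Set.Ioo (0:ℝ) 1] t₀, (Pi.single k t : Fin n → ℝ) ∈ closure B := by
      filter_upwards [self_mem_nhdsWithin] with t htm
      exact hsingle_mem k t htm
    have hmem : (Pi.single k t₀ : Fin n → ℝ) ∈ closure B :=
      isClosed_closure.mem_of_tendsto hqtend hev_mem
    refine ⟨hmem, ?_⟩
    have htend2 : Tendsto (fun t => (Pi.single k t : Fin n → ℝ)) (𝓝[Set.Ioo (0:ℝ) 1] t₀)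
        (𝓝[closure B] (Pi.single k t₀)) :=
      tendsto_nhdsWithin_iff.mpr ⟨hqtend, hev_mem⟩
    have hnorm_tend : Tendsto (fun t => ‖G (Pi.single k t)‖) (𝓝[Set.Ioo (0:ℝ) 1] t₀)
        (𝓝 ‖G (Pi.single k t₀)‖) :=
      (continuous_norm.tendsto _).comp ((hGcont.continuousWithinAt hmem).tendsto.comp htend2)
    refine le_of_tendsto hnorm_tend ?_
    filter_upwards [self_mem_nhdsWithin] with t htm
    exact hbd k t htm
  set k₀ : Fin n := ⟨0, hn⟩ with hk₀_def
  have hzero : (0 : Fin n → ℝ) ∈ closure B ∧ ‖G 0‖ ≤ 1 := by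
    have := hvert k₀ 0 (by norm_num)
    rwa [Pi.single_zero] at this
  -- the sublevel set is convex
  set S₁ : Set (Fin n → ℝ) := {v | v ∈ closure B ∧ ‖G v‖ ≤ 1} with hS₁_def
  have hS₁conv : Convex ℝ S₁ := by
    intro x hx y hy α β hα hβ hαβ
    have hmem : α • x + β • y ∈ closure B := hclconv hx.1 hy.1 hα hβ hαβ
    refine ⟨hmem, ?_⟩
    have heq : α • x + β • y = x + β • (y - x) := by
      funext j
      have : α = 1 - β := by linarith
      simp [Pi.add_apply, Pi.smul_apply, Pi.sub_apply, smul_eq_mul, this]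
      ring
    rw [heq]
    refine (hqc x hx.1 y hy.1 β ⟨hβ, by linarith⟩).trans ?_
    exact max_le hx.2 hy.2
  -- decompose any point of the closure as a convex combination of vertices
  intro y hy
  have hC : closure B ⊆ {v : Fin n → ℝ | (∀ j, 0 ≤ v j) ∧ (∑ j, v j) ≤ 1} := by
    refine closure_minimal ?_ ?_
    · rw [hB]; rintro v ⟨h1, _, h3⟩; exact ⟨fun j => (h1 j).1.le, h3.le⟩
    · have h1 : IsClosed {v : Fin n → ℝ | ∀ j, 0 ≤ v j} := by
        have : {v : Fin n → ℝ | ∀ j, 0 ≤ v j}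
            = ⋂ j, ((fun v : Fin n → ℝ => v j) ⁻¹' Set.Ici 0) := by
          ext v; simp
        rw [this]
        exact isClosed_iInter fun j => isClosed_Ici.preimage (continuous_apply j)
      have h2 : IsClosed {v : Fin n → ℝ | (∑ j, v j) ≤ 1} := isClosed_Iic.preimage hsum_cont
      exact h1.inter h2
  obtain ⟨hynn, hysum⟩ := hC hy
  set w : Option (Fin n) → ℝ := fun i => Option.elim i (1 - ∑ j, y j) (fun k => y k) with hw_def
  set z : Option (Fin n) → (Fin n → ℝ) :=
    fun i => Option.elim i 0 (fun k => Pi.single k 1) with hz_def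
  have hw0 : ∀ i ∈ (Finset.univ : Finset (Option (Fin n))), 0 ≤ w i := by
    rintro (_ | k) _
    · simpa [hw_def] using by linarith
    · simpa [hw_def] using hynn k
  have hw1 : (∑ i : Option (Fin n), w i) = 1 := by
    rw [Fintype.sum_option]
    simp [hw_def]
  have hz1 : ∀ i ∈ (Finset.univ : Finset (Option (Fin n))), z i ∈ S₁ := by
    rintro (_ | k) _
    · exact hzero
    · exact hvert k 1 (by norm_num)
  have hsum_eq : (∑ i : Option (Fin n), w i • z i) = y := by
    rw [Fintype.sum_option]
    have h0 : w none • z none = 0 := by simp [hw_def, hz_def]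
    rw [h0, zero_add]
    funext j
    rw [Finset.sum_apply]
    have : ∀ k : Fin n, (w (some k) • z (some k)) j = y k * ((Pi.single k 1 : Fin n → ℝ) j) := by
      intro k; simp [hw_def, hz_def]
    rw [Finset.sum_congr rfl fun k _ => this k]
    simp [Pi.single_apply, mul_ite, Finset.sum_ite_eq]
  have hyS₁ : y ∈ S₁ := by
    rw [← hsum_eq]
    exact hS₁conv.sum_mem hw0 hw1 hz1
  exact hyS₁.2
end

section
/- Let f : S(a,b) → ℂ be analytic on the horizontal strip S(a,b) with f_y ∈ L²(ℝ), where f_y(θ) = f(θ+iy), and ‖f_y‖₂ ≤ C for all y ∈ (a,b). Then for any y ∈ (a,b), |f(θ+iy)| → 0 as |θ| → ∞. -/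
open Complex MeasureTheory Filter Topology
open Metric Set
open scoped ENNReal NNReal

set_option maxHeartbeats 1000000

lemma circle_avg (a b : ℝ) (f : ℂ → ℂ)
    (hf : DifferentiableOn ℂ f {z : ℂ | a < z.im ∧ z.im < b})
    (c : ℂ) (ρ : ℝ) (hρ : 0 < ρ)
    (hsub : closedBall c ρ ⊆ {z : ℂ | a < z.im ∧ z.im < b}) :
    2 * Real.pi * ‖f c‖ ^ 2 ≤ ∫ θ in (0:ℝ)..(2 * Real.pi), ‖f (circleMap c ρ θ)‖ ^ 2 := by
  have hopen : IsOpen {z : ℂ | a < z.im ∧ z.im < b} := by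
    have : {z : ℂ | a < z.im ∧ z.im < b} = Complex.im ⁻¹' (Set.Ioo a b) := rfl
    rw [this]; exact isOpen_Ioo.preimage Complex.continuous_im
  have hcont : ContinuousOn (fun z => f z ^ 2) (closedBall c ρ) :=
    ((hf.pow 2).continuousOn).mono hsub
  have hdiff : ∀ z ∈ ball c ρ \ (∅ : Set ℂ), DifferentiableAt ℂ (fun z => f z ^ 2) z := by
    intro z hz
    have hz' : z ∈ {z : ℂ | a < z.im ∧ z.im < b} := hsub (ball_subset_closedBall hz.1)
    exact (hf.differentiableAt (hopen.mem_nhds hz')).pow 2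
  have key := Complex.circleIntegral_sub_center_inv_smul_of_differentiable_on_off_countable
    hρ Set.countable_empty hcont hdiff
  have h1 : (∮ z in C(c, ρ), (z - c)⁻¹ • f z ^ 2)
      = ∫ θ in (0:ℝ)..(2 * Real.pi), I * f (circleMap c ρ θ) ^ 2 := by
    simp only [circleIntegral, deriv_circleMap, circleMap_sub_center, smul_eq_mul]
    refine intervalIntegral.integral_congr fun θ _ => ?_
    have hne : circleMap 0 ρ θ ≠ 0 := circleMap_ne_center hρ.ne'
    field_simp
  have h2 : f c ^ 2 = ((2 * Real.pi : ℝ) : ℂ)⁻¹ * ∫ θ in (0:ℝ)..(2 * Real.pi),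
      f (circleMap c ρ θ) ^ 2 := by
    have h3 := key.symm.trans h1
    rw [intervalIntegral.integral_const_mul, smul_eq_mul] at h3
    have hπ : (Real.pi : ℂ) ≠ 0 := by exact_mod_cast Real.pi_ne_zero
    have h4 : (2 * (Real.pi:ℂ) * I) ≠ 0 := by
      simp [Complex.I_ne_zero, hπ]
    have h5 : (2 * (Real.pi:ℂ) * I)⁻¹ * (2 * (Real.pi:ℂ) * I * f c ^ 2)
        = (2 * (Real.pi:ℂ) * I)⁻¹ * (I * ∫ θ in (0:ℝ)..(2 * Real.pi), f (circleMap c ρ θ) ^ 2) := by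
      rw [h3]
    rw [← mul_assoc, inv_mul_cancel₀ h4, one_mul] at h5
    rw [h5, mul_inv, mul_assoc, ← mul_assoc I⁻¹, inv_mul_cancel₀ Complex.I_ne_zero, one_mul]
    push_cast
    ring
  have hnorm : ‖f c‖ ^ 2 ≤ (2 * Real.pi)⁻¹ * ∫ θ in (0:ℝ)..(2 * Real.pi),
      ‖f (circleMap c ρ θ)‖ ^ 2 := by
    calc ‖f c‖ ^ 2 = ‖f c ^ 2‖ := (norm_pow _ 2).symm
      _ = ‖((2 * Real.pi : ℝ) : ℂ)⁻¹‖ * ‖∫ θ in (0:ℝ)..(2 * Real.pi), f (circleMap c ρ θ) ^ 2‖ := by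
          rw [h2, norm_mul]
      _ ≤ (2 * Real.pi)⁻¹ * ∫ θ in (0:ℝ)..(2 * Real.pi), ‖f (circleMap c ρ θ) ^ 2‖ := by
          rw [norm_inv, Complex.norm_real, Real.norm_of_nonneg (by positivity)]
          gcongr
          exact intervalIntegral.norm_integral_le_integral_norm (by positivity)
      _ = (2 * Real.pi)⁻¹ * ∫ θ in (0:ℝ)..(2 * Real.pi), ‖f (circleMap c ρ θ)‖ ^ 2 := by
          simp [norm_pow]
  have hπ := Real.pi_pos
  calc 2 * Real.pi * ‖f c‖ ^ 2
      ≤ 2 * Real.pi * ((2 * Real.pi)⁻¹ * ∫ θ in (0:ℝ)..(2 * Real.pi),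
        ‖f (circleMap c ρ θ)‖ ^ 2) :=
        mul_le_mul_of_nonneg_left hnorm (by positivity)
    _ = ∫ θ in (0:ℝ)..(2 * Real.pi), ‖f (circleMap c ρ θ)‖ ^ 2 := by
        field_simp

lemma submean (a b : ℝ) (f : ℂ → ℂ)
    (hf : DifferentiableOn ℂ f {z : ℂ | a < z.im ∧ z.im < b})
    (c : ℂ) (r : ℝ) (hr : 0 < r)
    (hsub : closedBall c r ⊆ {z : ℂ | a < z.im ∧ z.im < b}) :
    Real.pi * r ^ 2 * ‖f c‖ ^ 2 ≤ ∫ w in ball c r, ‖f w‖ ^ 2 := by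
  have hπ := Real.pi_pos
  set A : ℝ × ℝ → ℝ := fun p => ‖f (c + ↑p.1 * (Real.cos p.2 + Real.sin p.2 * I))‖ ^ 2 with hA
  -- A p = ‖f (c + polarCoord.symm p)‖^2
  have hAc : ∀ p : ℝ × ℝ, A p = ‖f (c + Complex.polarCoord.symm p)‖ ^ 2 := by
    intro p; rw [Complex.polarCoord_symm_apply]
  -- continuity of the integrand on a compact neighborhood
  have hmapsTo : ∀ p : ℝ × ℝ, p ∈ Set.Icc (0:ℝ) r ×ˢ (Set.univ : Set ℝ) →
      c + ↑p.1 * (Real.cos p.2 + Real.sin p.2 * I) ∈ closedBall c r := by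
    intro p hp
    rw [mem_closedBall, dist_eq_norm, add_sub_cancel_left]
    have hn : ‖(↑p.1 * (Real.cos p.2 + Real.sin p.2 * I) : ℂ)‖ = |p.1| := by
      rw [← Complex.polarCoord_symm_apply, Complex.norm_polarCoord_symm]
    rw [hn, _root_.abs_of_nonneg hp.1.1]
    exact hp.1.2
  have hcontm : Continuous fun p : ℝ × ℝ => c + ↑p.1 * (Real.cos p.2 + Real.sin p.2 * I) := by
    fun_prop
  have hcontA : ContinuousOn (fun p : ℝ × ℝ => p.1 * A p)
      (Set.Icc (0:ℝ) r ×ˢ Set.Icc (-Real.pi) Real.pi) := by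
    apply ContinuousOn.mul continuous_fst.continuousOn
    apply ContinuousOn.pow
    apply ContinuousOn.norm
    apply (hf.continuousOn.mono hsub).comp hcontm.continuousOn
    intro p hp
    exact hmapsTo p ⟨⟨hp.1.1, hp.1.2⟩, trivial⟩
  have hInt : IntegrableOn (fun p : ℝ × ℝ => p.1 * A p)
      (Set.Ioo (0:ℝ) r ×ˢ Set.Ioo (-Real.pi) Real.pi) := by
    refine (hcontA.integrableOn_compact (isCompact_Icc.prod isCompact_Icc)).mono_set ?_
    exact Set.prod_mono Set.Ioo_subset_Icc_self Set.Ioo_subset_Icc_self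
  -- polar coordinates identity
  have hpolar : ∫ p in Set.Ioo (0:ℝ) r ×ˢ Set.Ioo (-Real.pi) Real.pi, p.1 * A p
      = ∫ w in ball c r, ‖f w‖ ^ 2 := by
    have h1 := Complex.integral_comp_polarCoord_symm
      (fun w => Set.indicator (ball (0:ℂ) r) (fun w => ‖f (c + w)‖ ^ 2) w)
    have h2 : ∀ p ∈ polarCoord.target,
        p.1 • (ball (0:ℂ) r).indicator (fun w => ‖f (c + w)‖ ^ 2) (Complex.polarCoord.symm p)
        = (Set.Ioo (0:ℝ) r ×ˢ Set.Ioo (-Real.pi) Real.pi).indicator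
            (fun p : ℝ × ℝ => p.1 * A p) p := by
      intro p hp
      rw [polarCoord_target] at hp
      obtain ⟨hp1, hp2⟩ := hp
      by_cases hpr : p.1 < r
      · have hmem : Complex.polarCoord.symm p ∈ ball (0:ℂ) r := by
          rw [mem_ball_zero_iff, Complex.norm_polarCoord_symm,
            _root_.abs_of_nonneg (le_of_lt hp1)]
          exact hpr
        rw [Set.indicator_of_mem hmem, Set.indicator_of_mem (Set.mem_prod.mpr ⟨Set.mem_Ioo.mpr ⟨Set.mem_Ioi.mp hp1, hpr⟩, hp2⟩), smul_eq_mul, hAc]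
      · have hmem : Complex.polarCoord.symm p ∉ ball (0:ℂ) r := by
          rw [mem_ball_zero_iff, Complex.norm_polarCoord_symm,
            _root_.abs_of_nonneg (le_of_lt hp1)]
          exact hpr
        rw [Set.indicator_of_notMem hmem, Set.indicator_of_notMem, smul_zero]
        intro hmem2; exact hpr hmem2.1.2
    have hsubt : Set.Ioo (0:ℝ) r ×ˢ Set.Ioo (-Real.pi) Real.pi ⊆ polarCoord.target := by
      rw [polarCoord_target]
      exact Set.prod_mono (fun x hx => hx.1) subset_rfl
    calc ∫ p in Set.Ioo (0:ℝ) r ×ˢ Set.Ioo (-Real.pi) Real.pi, p.1 * A p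
        = ∫ p in polarCoord.target, (Set.Ioo (0:ℝ) r ×ˢ Set.Ioo (-Real.pi) Real.pi).indicator
            (fun p : ℝ × ℝ => p.1 * A p) p := by
          rw [setIntegral_indicator (measurableSet_Ioo.prod measurableSet_Ioo),
            Set.inter_eq_self_of_subset_right hsubt]
      _ = ∫ p in polarCoord.target,
            p.1 • (ball (0:ℂ) r).indicator (fun w => ‖f (c + w)‖ ^ 2) (Complex.polarCoord.symm p) :=
          (setIntegral_congr_fun polarCoord.open_target.measurableSet h2).symm
      _ = ∫ w, (ball (0:ℂ) r).indicator (fun w => ‖f (c + w)‖ ^ 2) w := h1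
      _ = ∫ w in ball (0:ℂ) r, ‖f (c + w)‖ ^ 2 := integral_indicator measurableSet_ball
      _ = ∫ w in ball c r, ‖f w‖ ^ 2 := by
          have hpre : (fun w : ℂ => c + w) ⁻¹' ball c r = ball (0:ℂ) r := by
            ext w
            simp [mem_ball, dist_eq_norm, add_sub_cancel_left]
          rw [← hpre]
          exact (measurePreserving_add_left volume c).setIntegral_preimage_emb
            (measurableEmbedding_addLeft c) (fun w => ‖f w‖ ^ 2) (ball c r)
  -- Fubini
  have hprodInt : Integrable (fun p : ℝ × ℝ => p.1 * A p)
      ((volume.restrict (Set.Ioo (0:ℝ) r)).prod (volume.restrict (Set.Ioo (-Real.pi) Real.pi))) := by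
    rw [Measure.prod_restrict, ← Measure.volume_eq_prod]
    exact hInt
  have hiter : ∫ p in Set.Ioo (0:ℝ) r ×ˢ Set.Ioo (-Real.pi) Real.pi, p.1 * A p
      = ∫ x in Set.Ioo (0:ℝ) r, ∫ θ in Set.Ioo (-Real.pi) Real.pi, x * A (x, θ) := by
    rw [Measure.volume_eq_prod, ← Measure.prod_restrict]
    exact integral_prod _ hprodInt
  -- inner circle-average bound
  have hcirc : ∀ x ∈ Set.Ioo (0:ℝ) r,
      2 * Real.pi * ‖f c‖ ^ 2 * x ≤ ∫ θ in Set.Ioo (-Real.pi) Real.pi, x * A (x, θ) := by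
    intro x hx
    have h0 := circle_avg a b f hf c x hx.1 ((closedBall_subset_closedBall hx.2.le).trans hsub)
    have hper : Function.Periodic (fun θ : ℝ => ‖f (circleMap c x θ)‖ ^ 2) (2 * Real.pi) := by
      intro θ; simp [periodic_circleMap c x θ]
    have heq1 : ∫ θ in (0:ℝ)..(2 * Real.pi), ‖f (circleMap c x θ)‖ ^ 2
        = ∫ θ in (-Real.pi)..Real.pi, ‖f (circleMap c x θ)‖ ^ 2 := by
      have h := hper.intervalIntegral_add_eq 0 (-Real.pi)
      rw [zero_add] at h
      convert h using 2
      ring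
    have heq3 : ∀ θ : ℝ, ‖f (circleMap c x θ)‖ ^ 2 = A (x, θ) := by
      intro θ
      simp only [hA]
      congr 3
      simp only [circleMap, Complex.exp_mul_I]
      push_cast
      ring
    have heq2 : ∫ θ in (-Real.pi)..Real.pi, ‖f (circleMap c x θ)‖ ^ 2
        = ∫ θ in Set.Ioo (-Real.pi) Real.pi, A (x, θ) := by
      rw [intervalIntegral.integral_of_le (by linarith), integral_Ioc_eq_integral_Ioo]
      exact setIntegral_congr_fun measurableSet_Ioo fun θ _ => heq3 θ
    rw [integral_const_mul]
    have hineq : 2 * Real.pi * ‖f c‖ ^ 2 ≤ ∫ θ in Set.Ioo (-Real.pi) Real.pi, A (x, θ) := by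
      rw [← heq2, ← heq1]; exact h0
    calc 2 * Real.pi * ‖f c‖ ^ 2 * x = x * (2 * Real.pi * ‖f c‖ ^ 2) := by ring
      _ ≤ x * ∫ θ in Set.Ioo (-Real.pi) Real.pi, A (x, θ) :=
          mul_le_mul_of_nonneg_left hineq hx.1.le
  -- outer integral
  have hmarg : IntegrableOn (fun x : ℝ => ∫ θ in Set.Ioo (-Real.pi) Real.pi, x * A (x, θ))
      (Set.Ioo (0:ℝ) r) := hprodInt.integral_prod_left
  have hlow : IntegrableOn (fun x : ℝ => 2 * Real.pi * ‖f c‖ ^ 2 * x) (Set.Ioo (0:ℝ) r) :=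
    ((continuous_const.mul continuous_id).integrableOn_Icc).mono_set Set.Ioo_subset_Icc_self
  have houter := setIntegral_mono_on hlow hmarg measurableSet_Ioo hcirc
  have hval : ∫ x in Set.Ioo (0:ℝ) r, 2 * Real.pi * ‖f c‖ ^ 2 * x
      = Real.pi * r ^ 2 * ‖f c‖ ^ 2 := by
    rw [integral_const_mul, ← integral_Ioc_eq_integral_Ioo,
      ← intervalIntegral.integral_of_le hr.le, integral_id]
    ring
  rw [← hpolar, hiter, ← hval]
  exact houter

theorem stmt9 (a b C : ℝ) (hab : a < b) (f : ℂ → ℂ)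
    (hf : DifferentiableOn ℂ f {z : ℂ | a < z.im ∧ z.im < b})
    (hL2 : ∀ y ∈ Set.Ioo a b, MemLp (fun x : ℝ => f (x + y * I)) 2 volume)
    (hC : ∀ y ∈ Set.Ioo a b,
      eLpNorm (fun x : ℝ => f (x + y * I)) 2 volume ≤ ENNReal.ofReal C) :
    ∀ y ∈ Set.Ioo a b,
      Tendsto (fun θ : ℝ => f (θ + y * I)) (cocompact ℝ) (𝓝 0) := by
  intro y hy
  obtain ⟨hya, hyb⟩ := hy
  set S := {z : ℂ | a < z.im ∧ z.im < b} with hS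
  have hSopen : IsOpen S := by
    have : S = Complex.im ⁻¹' (Set.Ioo a b) := rfl
    rw [this]; exact isOpen_Ioo.preimage Complex.continuous_im
  set r := min (y - a) (b - y) / 2 with hrdef
  have hr : 0 < r := by
    apply div_pos _ two_pos
    exact lt_min (by linarith) (by linarith)
  have hrya : r < y - a := by
    have h1 : min (y - a) (b - y) ≤ y - a := min_le_left _ _
    have h2 : 0 < min (y - a) (b - y) := lt_min (by linarith) (by linarith)
    rw [hrdef]; linarith
  have hryb : r < b - y := by
    have h1 : min (y - a) (b - y) ≤ b - y := min_le_right _ _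
    have h2 : 0 < min (y - a) (b - y) := lt_min (by linarith) (by linarith)
    rw [hrdef]; linarith
  -- the closed ball is inside the strip
  have him : ∀ (x' y' : ℝ), ((x' : ℂ) + y' * I).im = y' := by
    intro x' y'; simp
  have hball : ∀ θ : ℝ, closedBall ((θ : ℂ) + y * I) r ⊆ S := by
    intro θ z hz
    rw [mem_closedBall, Complex.dist_eq] at hz
    have h1 : |(z - ((θ:ℂ) + y * I)).im| ≤ ‖z - ((θ:ℂ) + y * I)‖ :=
      Complex.abs_im_le_norm _
    have h2 : (z - ((θ:ℂ) + y * I)).im = z.im - y := by simp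
    rw [h2] at h1
    have := abs_le.mp (h1.trans hz)
    show a < z.im ∧ z.im < b
    constructor <;> linarith
  -- measurable extension of f by 0 outside the strip
  haveI : ∀ j : ℂ, Decidable (j ∈ S) := fun j => Classical.dec _
  set g : ℂ → ℂ := S.piecewise f (fun _ => 0) with hg
  have hgmeas : Measurable g :=
    ContinuousOn.measurable_piecewise hf.continuousOn continuousOn_const hSopen.measurableSet
  have hgf : ∀ z ∈ S, g z = f z := fun z hz => Set.piecewise_eq_of_mem _ _ _ hz
  set G : ℝ → ℝ → ℝ≥0∞ := fun y' x => (‖g ((x : ℂ) + y' * I)‖₊ : ℝ≥0∞) ^ 2 with hG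
  have hGmeas : Measurable (Function.uncurry G) := by
    have hc : Measurable fun p : ℝ × ℝ => ((p.2 : ℂ) + p.1 * I) := by fun_prop
    exact ((hgmeas.comp hc).nnnorm.coe_nnreal_ennreal).pow_const 2
  -- the L² bound on each slice
  have hmemIoo : ∀ (x' y' : ℝ), y' ∈ Set.Ioo a b → ((x' : ℂ) + y' * I) ∈ S := by
    intro x' y' h
    show a < ((x':ℂ) + y' * I).im ∧ ((x':ℂ) + y' * I).im < b
    rw [him x' y']; exact ⟨h.1, h.2⟩
  have hslice : ∀ y' ∈ Set.Ioo a b, ∫⁻ x, G y' x ≤ (ENNReal.ofReal C) ^ 2 := by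
    intro y' hy'
    have heqf : (fun x : ℝ => g ((x:ℂ) + y' * I)) = fun x : ℝ => f ((x:ℂ) + y' * I) :=
      funext fun x => hgf _ (hmemIoo x y' hy')
    have h2 := hC y' hy'
    have help : eLpNorm (fun x : ℝ => f ((x:ℂ) + y' * I)) 2 volume
        = (∫⁻ x, G y' x) ^ (1/(2:ℝ)) := by
      rw [eLpNorm_eq_lintegral_rpow_enorm_toReal (by norm_num) (by norm_num)]
      congr 1
      · refine lintegral_congr fun x => ?_
        show (‖f ((x:ℂ) + y' * I)‖₊ : ℝ≥0∞) ^ ((2:ℝ≥0∞).toReal) = (‖g ((x:ℂ) + y' * I)‖₊ : ℝ≥0∞) ^ 2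
        rw [hgf _ (hmemIoo x y' hy'), ← ENNReal.rpow_natCast]
        norm_num
    have hsq : (∫⁻ x, G y' x) = (eLpNorm (fun x : ℝ => f ((x:ℂ) + y' * I)) 2 volume) ^ 2 := by
      rw [help, ← ENNReal.rpow_natCast ((∫⁻ x, G y' x) ^ (1/(2:ℝ))) 2, ← ENNReal.rpow_mul]
      norm_num
    rw [hsq]
    exact pow_le_pow_left' h2 2
  have hfin : ∀ y' ∈ Set.Ioo a b, ∫⁻ x, G y' x ≠ ∞ := fun y' hy' =>
    ((hslice y' hy').trans_lt (ENNReal.pow_lt_top ENNReal.ofReal_lt_top)).ne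
  -- the double tail integral
  set J : ℝ → ℝ≥0∞ := fun θ =>
    ∫⁻ y' in Set.Ioo (y - r) (y + r), ∫⁻ x in Set.Ioo (θ - r) (θ + r), G y' x with hJ
  have hIooy : Set.Ioo (y - r) (y + r) ⊆ Set.Ioo a b :=
    Set.Ioo_subset_Ioo (by linarith) (by linarith)
  -- Step A: pointwise submean bound
  have hstepA : ∀ θ : ℝ,
      ENNReal.ofReal (Real.pi * r ^ 2) * (‖f ((θ:ℂ) + y * I)‖₊ : ℝ≥0∞) ^ 2 ≤ J θ := by
    intro θ
    set c : ℂ := (θ:ℂ) + y * I with hc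
    have hsub := hball θ
    have h1 : Real.pi * r ^ 2 * ‖f c‖ ^ 2 ≤ ∫ w in ball c r, ‖f w‖ ^ 2 :=
      submean a b f hf c r hr hsub
    have h3 : ENNReal.ofReal (Real.pi * r ^ 2 * ‖f c‖ ^ 2)
        ≤ ∫⁻ w in ball c r, (‖f w‖₊ : ℝ≥0∞) ^ 2 := by
      calc ENNReal.ofReal (Real.pi * r ^ 2 * ‖f c‖ ^ 2)
          ≤ ENNReal.ofReal (∫ w in ball c r, ‖f w‖ ^ 2) := ENNReal.ofReal_le_ofReal h1
        _ ≤ ENNReal.ofReal ‖∫ w in ball c r, ‖f w‖ ^ 2‖ :=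
            ENNReal.ofReal_le_ofReal (le_abs_self _)
        _ = (‖∫ w in ball c r, ‖f w‖ ^ 2‖₊ : ℝ≥0∞) := ofReal_norm _
        _ ≤ ∫⁻ w in ball c r, (‖(‖f w‖ ^ 2 : ℝ)‖₊ : ℝ≥0∞) := enorm_integral_le_lintegral_enorm _
        _ = ∫⁻ w in ball c r, (‖f w‖₊ : ℝ≥0∞) ^ 2 := by
            refine lintegral_congr fun w => ?_
            rw [nnnorm_pow, nnnorm_norm]
            push_cast
            ring
    have h4 : ∫⁻ w in ball c r, (‖f w‖₊ : ℝ≥0∞) ^ 2 = ∫⁻ w in ball c r, (‖g w‖₊ : ℝ≥0∞) ^ 2 :=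
      setLIntegral_congr_fun measurableSet_ball (fun w hw => by
        rw [hgf w (hsub (ball_subset_closedBall hw))])
    set T : Set (ℝ × ℝ) := Set.Ioo (θ - r) (θ + r) ×ˢ Set.Ioo (y - r) (y + r) with hT
    have h5 : ball c r ⊆ Complex.measurableEquivRealProd ⁻¹' T := by
      intro z hz
      rw [mem_ball, Complex.dist_eq] at hz
      have hre : |(z - c).re| ≤ ‖z - c‖ := Complex.abs_re_le_norm _
      have him' : |(z - c).im| ≤ ‖z - c‖ := Complex.abs_im_le_norm _
      have hre2 : (z - c).re = z.re - θ := by simp [hc]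
      have him2 : (z - c).im = z.im - y := by simp [hc]
      rw [hre2] at hre; rw [him2] at him'
      have h6 := abs_lt.mp (hre.trans_lt hz)
      have h7 := abs_lt.mp (him'.trans_lt hz)
      show (Complex.measurableEquivRealProd z) ∈ T
      rw [hT]
      constructor
      · show z.re ∈ Set.Ioo (θ - r) (θ + r)
        constructor <;> linarith
      · show z.im ∈ Set.Ioo (y - r) (y + r)
        constructor <;> linarith
    have h8 : ∫⁻ w in ball c r, (‖g w‖₊ : ℝ≥0∞) ^ 2
        ≤ ∫⁻ w in Complex.measurableEquivRealProd ⁻¹' T, (‖g w‖₊ : ℝ≥0∞) ^ 2 :=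
      lintegral_mono_set h5
    have h9 : ∫⁻ w in Complex.measurableEquivRealProd ⁻¹' T, (‖g w‖₊ : ℝ≥0∞) ^ 2
        = ∫⁻ p in T, G p.2 p.1 := by
      have := Complex.volume_preserving_equiv_real_prod.setLIntegral_comp_preimage_emb
        Complex.measurableEquivRealProd.measurableEmbedding
        (fun p : ℝ × ℝ => G p.2 p.1) T
      rw [← this]
      refine setLIntegral_congr_fun
        ((measurableSet_Ioo.prod measurableSet_Ioo).preimage
          Complex.measurableEquivRealProd.measurable) (fun w _ => ?_)
      show (‖g w‖₊ : ℝ≥0∞) ^ 2 = (‖g ((w.re : ℂ) + w.im * I)‖₊ : ℝ≥0∞) ^ 2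
      rw [Complex.re_add_im]
    have h10 : ∫⁻ p in T, G p.2 p.1 = J θ := by
      have hGms0 : Measurable (Function.uncurry G ∘ Prod.swap) :=
        hGmeas.comp (measurable_swap : Measurable (Prod.swap : ℝ × ℝ → ℝ × ℝ))
      have hGms : Measurable (fun p : ℝ × ℝ => G p.2 p.1) := hGms0
      rw [hT, Measure.volume_eq_prod, ← Measure.prod_restrict,
        lintegral_prod _ hGms.aemeasurable, hJ]
      exact lintegral_lintegral_swap hGms.aemeasurable
    have hLHS : ENNReal.ofReal (Real.pi * r ^ 2) * (‖f c‖₊ : ℝ≥0∞) ^ 2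
        = ENNReal.ofReal (Real.pi * r ^ 2 * ‖f c‖ ^ 2) := by
      have h11 : ENNReal.ofReal (Real.pi * r ^ 2 * ‖f c‖ ^ 2)
          = ENNReal.ofReal (Real.pi * r ^ 2) * ENNReal.ofReal (‖f c‖ ^ 2) :=
        ENNReal.ofReal_mul (by positivity)
      rw [h11, ENNReal.ofReal_pow (norm_nonneg _), ofReal_norm]
      rfl
    calc ENNReal.ofReal (Real.pi * r ^ 2) * (‖f c‖₊ : ℝ≥0∞) ^ 2
        = ENNReal.ofReal (Real.pi * r ^ 2 * ‖f c‖ ^ 2) := hLHS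
      _ ≤ ∫⁻ w in ball c r, (‖f w‖₊ : ℝ≥0∞) ^ 2 := h3
      _ = ∫⁻ w in ball c r, (‖g w‖₊ : ℝ≥0∞) ^ 2 := h4
      _ ≤ ∫⁻ w in Complex.measurableEquivRealProd ⁻¹' T, (‖g w‖₊ : ℝ≥0∞) ^ 2 := h8
      _ = ∫⁻ p in T, G p.2 p.1 := h9
      _ = J θ := h10
  -- Step B: J tends to 0 at cocompact
  haveI hcg : (cocompact ℝ).IsCountablyGenerated := by
    rw [cocompact_eq_atBot_atTop]; infer_instance
  have hstepB : Tendsto J (cocompact ℝ) (𝓝 0) := by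
    have h0 : (0:ℝ≥0∞) = ∫⁻ _ in Set.Ioo (y - r) (y + r), (0:ℝ≥0∞) := by simp
    rw [hJ, h0]
    refine tendsto_lintegral_filter_of_dominated_convergence
      (fun _ => (ENNReal.ofReal C) ^ 2) ?_ ?_ ?_ ?_
    · -- measurability
      refine Eventually.of_forall fun θ => ?_
      exact Measurable.lintegral_prod_right hGmeas
    · -- bound
      refine Eventually.of_forall fun θ => ?_
      filter_upwards [ae_restrict_mem measurableSet_Ioo] with y' hy'
      exact (setLIntegral_le_lintegral _ _).trans (hslice y' (hIooy hy'))
    · -- bound integrable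
      rw [lintegral_const]
      exact ENNReal.mul_ne_top (ENNReal.pow_ne_top ENNReal.ofReal_ne_top)
        (by rw [Measure.restrict_apply_univ, Real.volume_Ioo]; exact ENNReal.ofReal_ne_top)
    · -- pointwise limit
      filter_upwards [ae_restrict_mem measurableSet_Ioo] with y' hy'
      have hy'ab := hIooy hy'
      rw [ENNReal.tendsto_nhds_zero]
      intro ε hε
      set ν : Measure ℝ := volume.withDensity (fun x => G y' x) with hν
      have hνs : ∀ s : Set ℝ, MeasurableSet s → ν s = ∫⁻ x in s, G y' x := fun s hs =>
        withDensity_apply _ hs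
      have hGym : Measurable (fun x => G y' x) := by
        have : Measurable fun x : ℝ => ((x:ℂ) + (y':ℂ) * I) := by fun_prop
        exact ((hgmeas.comp this).nnnorm.coe_nnreal_ennreal).pow_const 2
      have hνuniv : ν Set.univ ≠ ∞ := by
        rw [hνs _ MeasurableSet.univ, Measure.restrict_univ]
        exact hfin y' hy'ab
      have htend : Tendsto (fun n : ℕ => ν ((Set.Ioo (-(n:ℝ)) (n:ℝ))ᶜ)) atTop
          (𝓝 (ν (⋂ n : ℕ, (Set.Ioo (-(n:ℝ)) (n:ℝ))ᶜ))) := by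
        refine tendsto_measure_iInter_atTop
          (fun n => measurableSet_Ioo.compl.nullMeasurableSet) ?_ ⟨0, ?_⟩
        · intro m n hmn
          refine Set.compl_subset_compl.mpr (Set.Ioo_subset_Ioo ?_ ?_)
          · exact neg_le_neg (Nat.cast_le.mpr hmn)
          · exact_mod_cast hmn
        · exact ne_top_of_le_ne_top hνuniv (measure_mono (Set.subset_univ _))
      have hinter : (⋂ n : ℕ, (Set.Ioo (-(n:ℝ)) (n:ℝ))ᶜ) = ∅ := by
        rw [← Set.compl_iUnion, Set.compl_empty_iff]
        refine Set.eq_univ_of_forall fun x => ?_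
        obtain ⟨n, hn⟩ := exists_nat_gt |x|
        obtain ⟨h1, h2⟩ := abs_lt.mp hn
        exact Set.mem_iUnion.mpr ⟨n, h1, h2⟩
      rw [hinter, measure_empty] at htend
      have hev := htend.eventually_lt_const hε
      obtain ⟨n, hn⟩ := hev.exists
      have hcompl : (Set.Icc (-(n + r)) (n + r))ᶜ ∈ cocompact ℝ :=
        isCompact_Icc.compl_mem_cocompact
      refine Filter.mem_of_superset hcompl fun θ hθ => ?_
      have hθ' : θ < -(n + r) ∨ n + r < θ := by
        rcases not_and_or.mp hθ with h | h
        · left; exact not_le.mp h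
        · right; exact not_le.mp h
      have hss : Set.Ioo (θ - r) (θ + r) ⊆ (Set.Ioo (-(n:ℝ)) (n:ℝ))ᶜ := by
        intro x hx
        simp only [Set.mem_compl_iff, Set.mem_Ioo, not_and, not_lt]
        rcases hθ' with h | h
        · intro hx2; linarith [hx.2]
        · intro _; linarith [hx.1]
      calc ∫⁻ x in Set.Ioo (θ - r) (θ + r), G y' x
          ≤ ∫⁻ x in (Set.Ioo (-(n:ℝ)) (n:ℝ))ᶜ, G y' x := lintegral_mono_set hss
        _ = ν ((Set.Ioo (-(n:ℝ)) (n:ℝ))ᶜ) := (hνs _ measurableSet_Ioo.compl).symm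
        _ ≤ ε := hn.le
  -- final squeeze
  have hc0 : ENNReal.ofReal (Real.pi * r ^ 2) ≠ 0 := by
    rw [Ne, ENNReal.ofReal_eq_zero, not_le]
    positivity
  have hupper : Tendsto (fun θ => (ENNReal.ofReal (Real.pi * r ^ 2))⁻¹ * J θ)
      (cocompact ℝ) (𝓝 0) := by
    have h := ENNReal.Tendsto.const_mul hstepB (Or.inr (ENNReal.inv_ne_top.mpr hc0))
    simpa using h
  have hsq : Tendsto (fun θ : ℝ => (‖f ((θ:ℂ) + y * I)‖₊ : ℝ≥0∞) ^ 2) (cocompact ℝ) (𝓝 0) := by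
    refine tendsto_of_tendsto_of_tendsto_of_le_of_le tendsto_const_nhds hupper
      (fun θ => zero_le) fun θ => ?_
    have h := hstepA θ
    calc (‖f ((θ:ℂ) + y * I)‖₊ : ℝ≥0∞) ^ 2
        = (ENNReal.ofReal (Real.pi * r ^ 2))⁻¹ *
          (ENNReal.ofReal (Real.pi * r ^ 2) * (‖f ((θ:ℂ) + y * I)‖₊ : ℝ≥0∞) ^ 2) := by
          rw [← mul_assoc, ENNReal.inv_mul_cancel hc0 ENNReal.ofReal_ne_top, one_mul]
      _ ≤ (ENNReal.ofReal (Real.pi * r ^ 2))⁻¹ * J θ := mul_le_mul_right h _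
  have henn : Tendsto (fun θ : ℝ => (‖f ((θ:ℂ) + y * I)‖₊ : ℝ≥0∞)) (cocompact ℝ) (𝓝 0) := by
    rw [ENNReal.tendsto_nhds_zero] at hsq ⊢
    intro ε hε
    filter_upwards [hsq (ε ^ 2) (ENNReal.pow_pos hε 2)] with θ hθ
    by_contra hcon
    exact absurd hθ (not_le.mpr (ENNReal.pow_lt_pow_left two_ne_zero (not_le.mp hcon)))
  have hnn : Tendsto (fun θ : ℝ => ‖f ((θ:ℂ) + y * I)‖₊) (cocompact ℝ) (𝓝 0) := by
    rw [← ENNReal.coe_zero] at henn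
    exact ENNReal.tendsto_coe.mp henn
  rw [tendsto_zero_iff_norm_tendsto_zero]
  have hco : (fun θ : ℝ => ‖f ((θ:ℂ) + y * I)‖) = fun θ : ℝ => ((‖f ((θ:ℂ) + y * I)‖₊ : ℝ≥0) : ℝ) := by
    funext θ; rw [coe_nnnorm]
  rw [hco]
  exact NNReal.tendsto_coe.mpr hnn
end
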